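/- Let H be a weakly norming graph without isolated vertices and let F be a subgraph of H. Then e(F)/v(F) ≤ e(H)/v(H), i.e. the average degree of any subgraph of H is at most the average degree of H. -/

import Mathlib

open MeasureTheory

noncomputable def sym2Val {V Ω : Type*} (W : Ω → Ω → ℝ) (x : V → Ω) : Sym2 V → ℝ :=
  Sym2.lift ⟨fun i j => (W (x i) (x j) + W (x j) (x i)) / 2, fun i j => by simp [add_comm]⟩

/-- Homomorphism density `t(G, W)` of a graph `G` in a symmetric kernel `W`. -/
noncomputable def homDensity {V : Type} [Fintype V] {Ω : Type*} [MeasurableSpace Ω]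
    (G : SimpleGraph V) (μ : Measure Ω) (W : Ω → Ω → ℝ) : ℝ :=
  ∫ x : V → Ω, ∏ᶠ e ∈ G.edgeSet, sym2Val W x e ∂(Measure.pi fun _ => μ)

/-- Decorated homomorphism density `t(G, w)` for a decoration `w` of the edges. -/
noncomputable def decDensity {V : Type} [Fintype V] {Ω : Type*} [MeasurableSpace Ω]
    (G : SimpleGraph V) (μ : Measure Ω) (w : Sym2 V → Ω → Ω → ℝ) : ℝ :=
  ∫ x : V → Ω, ∏ᶠ e ∈ G.edgeSet, sym2Val (w e) x e ∂(Measure.pi fun _ => μ)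

/-- Bounded symmetric measurable kernel. -/
def GoodKernel {Ω : Type*} [MeasurableSpace Ω] (W : Ω → Ω → ℝ) : Prop :=
  Measurable (Function.uncurry W) ∧ (∀ x y, W x y = W y x) ∧ ∃ C, ∀ x y, |W x y| ≤ C

/-- Hatami's Hölder-type characterisation of weakly norming graphs. -/
def WeaklyNorming {V : Type} [Fintype V] (G : SimpleGraph V) : Prop :=
  ∀ (Ω : Type) (_ : MeasurableSpace Ω) (μ : Measure Ω), IsProbabilityMeasure μ →
    ∀ w : Sym2 V → Ω → Ω → ℝ, (∀ e, GoodKernel (w e)) → (∀ e x y, 0 ≤ w e x y) →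
      decDensity G μ w ^ G.edgeSet.ncard ≤ ∏ᶠ e ∈ G.edgeSet, homDensity G μ (w e)

/-- Hatami's Hölder-type characterisation of seminorming graphs. -/
def Seminorming {V : Type} [Fintype V] (G : SimpleGraph V) : Prop :=
  ∀ (Ω : Type) (_ : MeasurableSpace Ω) (μ : Measure Ω), IsProbabilityMeasure μ →
    ∀ w : Sym2 V → Ω → Ω → ℝ, (∀ e, GoodKernel (w e)) →
      decDensity G μ w ^ G.edgeSet.ncard ≤ ∏ᶠ e ∈ G.edgeSet, |homDensity G μ (w e)|

/-- Norming: seminorming and `‖·‖_H` vanishes only on a.e.-zero kernels. -/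
def Norming {V : Type} [Fintype V] (G : SimpleGraph V) : Prop :=
  Seminorming G ∧
    ∀ (Ω : Type) (_ : MeasurableSpace Ω) (μ : Measure Ω), IsProbabilityMeasure μ →
      ∀ W : Ω → Ω → ℝ, GoodKernel W → homDensity G μ W = 0 →
        ∀ᵐ p ∂(μ.prod μ), W p.1 p.2 = 0


/-! Test the Hölder inequality against the decoration that is `1_{X × X}` on the edges of a
subgraph `G ≤ H` and `1` on the other edges of `H`, with `μ(X) = 1/2`. The product of `1_{X × X}`
over the edges of a graph `G` is the indicator that all non-isolated vertices of `G` land in `X`,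
so `t(G, 1_{X × X}) = 2^{-|supp G|}`; the decorated density equals `t(G, 1_{X × X})` and, as `H`
has no isolated vertices, `t(H, 1_{X × X}) = 2^{-v(H)}`. Hölder thus gives
`v(H) e(G) ≤ |supp G| e(H)`, and the image `G` of `F` has `e(G) = e(F)` and `|supp G| ≤ v(F)`. -/

open SimpleGraph Set

theorem finprod_mem_eq_of_subset_of_eqOn_one {α M : Type*} [CommMonoid M] {f : α → M}
    {s t : Set α} (hst : s ⊆ t) (ht : t.Finite) (hf : ∀ i ∈ t \ s, f i = 1) :
    ∏ᶠ i ∈ t, f i = ∏ᶠ i ∈ s, f i := by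
  rw [← finprod_mem_mul_sdiff hst ht, finprod_mem_of_eqOn_one hf, mul_one]

theorem finprod_mem_const_eq_pow_ncard {α M : Type*} [CommMonoid M] {s : Set α}
    (hs : s.Finite) (c : M) : ∏ᶠ _ ∈ s, c = c ^ s.ncard := by
  rw [finprod_mem_eq_finite_toFinset_prod _ hs, Finset.prod_const, ncard_eq_toFinset_card _ hs]

theorem SimpleGraph.forall_mem_edgeSet_forall_mem_iff {V : Type*} (G : SimpleGraph V)
    (p : V → Prop) : (∀ e ∈ G.edgeSet, ∀ v ∈ e, p v) ↔ ∀ v ∈ G.support, p v := by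
  constructor
  · intro h v hv
    obtain ⟨w, hvw⟩ := G.mem_support.1 hv
    exact h s(v, w) hvw v (Sym2.mem_mk_left v w)
  · intro h e he v hv
    refine h v (G.mem_support.2 ⟨Sym2.Mem.other hv, ?_⟩)
    rwa [← mem_edgeSet, Sym2.other_spec hv]

theorem MeasureTheory.Measure.real_pi_pi_const {ι Ω : Type*} [Fintype ι] [MeasurableSpace Ω]
    (μ : Measure Ω) [IsProbabilityMeasure μ] (T : Set ι) (X : Set Ω) :
    (Measure.pi fun _ : ι => μ).real (T.pi fun _ => X) = μ.real X ^ T.ncard := by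
  classical
  rw [← pi_univ_ite, measureReal_def, Measure.pi_pi, ENNReal.toReal_prod]
  simp_rw [apply_ite μ, apply_ite ENNReal.toReal, measure_univ, ENNReal.toReal_one,
    ← measureReal_def, ← Set.mem_toFinset]
  rw [Fintype.prod_ite_mem, Finset.prod_const, ncard_eq_toFinset_card']

section Kernels

variable {Ω V : Type*}

noncomputable def indicatorKernel (X : Set Ω) : Ω → Ω → ℝ :=
  fun a b => X.indicator 1 a * X.indicator 1 b

theorem indicatorKernel_nonneg (X : Set Ω) (a b : Ω) : 0 ≤ indicatorKernel X a b := by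
  unfold indicatorKernel
  exact mul_nonneg (indicator_nonneg (fun _ _ => zero_le_one) a)
    (indicator_nonneg (fun _ _ => zero_le_one) b)

theorem goodKernel_indicatorKernel [MeasurableSpace Ω] {X : Set Ω} (hX : MeasurableSet X) :
    GoodKernel (indicatorKernel X) := by
  refine ⟨?_, fun a b => mul_comm _ _, 1, fun a b => ?_⟩
  · exact ((measurable_one.indicator hX).comp measurable_fst).mul
      ((measurable_one.indicator hX).comp measurable_snd)
  · unfold indicatorKernel
    simp only [indicator, Pi.one_apply]
    split_ifs <;> norm_num

theorem goodKernel_one [MeasurableSpace Ω] : GoodKernel (1 : Ω → Ω → ℝ) :=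
  ⟨measurable_const, fun _ _ => rfl, 1, fun _ _ => by simp⟩

theorem sym2Val_one (x : V → Ω) (e : Sym2 V) : sym2Val (1 : Ω → Ω → ℝ) x e = 1 := by
  induction e using Sym2.ind with
  | _ i j => simp [sym2Val]

theorem sym2Val_indicatorKernel (X : Set Ω) (x : V → Ω) (e : Sym2 V)
    [Decidable (∀ v ∈ e, x v ∈ X)] :
    sym2Val (indicatorKernel X) x e = if ∀ v ∈ e, x v ∈ X then 1 else 0 := by
  revert ‹Decidable (∀ v ∈ e, x v ∈ X)›
  induction e using Sym2.ind with
  | _ i j =>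
    intro
    simp only [sym2Val, indicatorKernel, Sym2.lift_mk, Sym2.mem_iff, forall_eq_or_imp, forall_eq]
    by_cases hi : x i ∈ X <;> by_cases hj : x j ∈ X <;> simp [hi, hj]

theorem finprod_sym2Val_indicatorKernel [Finite V] (G : SimpleGraph V) (X : Set Ω)
    (x : V → Ω) :
    ∏ᶠ e ∈ G.edgeSet, sym2Val (indicatorKernel X) x e =
      (G.support.pi fun _ => X).indicator 1 x := by
  classical
  simp_rw [sym2Val_indicatorKernel]
  rw [finprod_mem_eq_finite_toFinset_prod _ G.edgeSet.toFinite, Finset.prod_boole]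
  simp only [Finite.mem_toFinset, G.forall_mem_edgeSet_forall_mem_iff (fun v => x v ∈ X),
    indicator, mem_pi, Pi.one_apply]

open Classical in
noncomputable def subgraphDecoration (G : SimpleGraph V) (X : Set Ω) :
    Sym2 V → Ω → Ω → ℝ :=
  fun e => if e ∈ G.edgeSet then indicatorKernel X else 1

theorem goodKernel_subgraphDecoration [MeasurableSpace Ω] {G : SimpleGraph V} {X : Set Ω}
    (hX : MeasurableSet X) (e : Sym2 V) :
    GoodKernel (subgraphDecoration G X e) := by
  unfold subgraphDecoration
  split_ifs
  exacts [goodKernel_indicatorKernel hX, goodKernel_one]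

theorem subgraphDecoration_nonneg {G : SimpleGraph V} (X : Set Ω) (e : Sym2 V) (a b : Ω) :
    0 ≤ subgraphDecoration G X e a b := by
  unfold subgraphDecoration
  split_ifs
  exacts [indicatorKernel_nonneg X a b, zero_le_one]

end Kernels

section Densities

variable {V : Type} [Fintype V] {Ω : Type*} [MeasurableSpace Ω]

theorem homDensity_indicatorKernel (G : SimpleGraph V) (μ : Measure Ω) [IsProbabilityMeasure μ]
    {X : Set Ω} (hX : MeasurableSet X) :
    homDensity G μ (indicatorKernel X) = μ.real X ^ G.support.ncard := by
  simp_rw [homDensity, finprod_sym2Val_indicatorKernel]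
  rw [integral_indicator_one (MeasurableSet.pi (to_countable _) fun _ _ => hX),
    Measure.real_pi_pi_const]

theorem homDensity_one (G : SimpleGraph V) (μ : Measure Ω) [IsProbabilityMeasure μ] :
    homDensity G μ 1 = 1 := by
  simp [homDensity, sym2Val_one]

variable {G H : SimpleGraph V}

theorem decDensity_subgraphDecoration (hGH : G ≤ H) (μ : Measure Ω) (X : Set Ω) :
    decDensity H μ (subgraphDecoration G X) = homDensity G μ (indicatorKernel X) := by
  unfold decDensity homDensity
  congr 1 with x
  rw [finprod_mem_eq_of_subset_of_eqOn_one (edgeSet_mono hGH) H.edgeSet.toFinite]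
  · exact finprod_mem_congr rfl fun e he => by simp [subgraphDecoration, he]
  · intro e ⟨_, he⟩
    simp [subgraphDecoration, he, sym2Val_one]

theorem finprod_homDensity_subgraphDecoration (hGH : G ≤ H) (μ : Measure Ω)
    [IsProbabilityMeasure μ] (X : Set Ω) :
    ∏ᶠ e ∈ H.edgeSet, homDensity H μ (subgraphDecoration G X e)
      = homDensity H μ (indicatorKernel X) ^ G.edgeSet.ncard := by
  rw [finprod_mem_eq_of_subset_of_eqOn_one (edgeSet_mono hGH) H.edgeSet.toFinite]
  · rw [← finprod_mem_const_eq_pow_ncard G.edgeSet.toFinite]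
    exact finprod_mem_congr rfl fun e he => by simp [subgraphDecoration, he]
  · intro e ⟨_, he⟩
    simp [subgraphDecoration, he, homDensity_one]

end Densities

theorem PMF.toMeasure_uniformOfFintype_real_singleton {α : Type*} [Fintype α] [Nonempty α]
    [MeasurableSpace α] [MeasurableSingletonClass α] (a : α) :
    (PMF.uniformOfFintype α).toMeasure.real {a} = (Fintype.card α : ℝ)⁻¹ := by
  simp [measureReal_def, PMF.toMeasure_apply_singleton _ a (measurableSet_singleton a)]

theorem WeaklyNorming.card_mul_ncard_edgeSet_le {V : Type} [Fintype V] {G H : SimpleGraph V}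
    (hH : WeaklyNorming H) (hnoiso : ∀ v, ∃ u, H.Adj v u) (hGH : G ≤ H) :
    Fintype.card V * G.edgeSet.ncard ≤ G.support.ncard * H.edgeSet.ncard := by
  set μ := (PMF.uniformOfFintype Bool).toMeasure
  have hX : MeasurableSet {true} := measurableSet_singleton true
  have hμX : μ.real {true} = 1 / 2 := by
    simp [μ, PMF.toMeasure_uniformOfFintype_real_singleton]
  have hHsupp : H.support = univ := eq_univ_of_forall fun v => H.mem_support.2 (hnoiso v)
  have holder := hH Bool _ μ inferInstance (subgraphDecoration G {true})
    (goodKernel_subgraphDecoration hX) (subgraphDecoration_nonneg _)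
  rw [decDensity_subgraphDecoration hGH, finprod_homDensity_subgraphDecoration hGH,
    homDensity_indicatorKernel _ _ hX, homDensity_indicatorKernel _ _ hX, hHsupp, ncard_univ,
    Nat.card_eq_fintype_card, hμX, ← pow_mul, ← pow_mul,
    pow_le_pow_iff_right_of_lt_one₀ (by norm_num) (by norm_num)] at holder
  exact holder

/-- A weakly norming graph `H` without isolated vertices has no subgraph of larger
average degree: if `F` (on vertex set `U`) embeds into `H`, then
`e(F)/v(F) ≤ e(H)/v(H)`. -/
theorem weaklyNorming_avg_degree_max {V U : Type} [Fintype V] [Fintype U]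
    (H : SimpleGraph V) (hH : WeaklyNorming H)
    (hnoiso : ∀ v : V, ∃ u, H.Adj v u)
    (F : SimpleGraph U) (f : U → V) (hf : Function.Injective f)
    (hhom : ∀ a b, F.Adj a b → H.Adj (f a) (f b)) :
    (F.edgeSet.ncard : ℝ) / (Fintype.card U : ℝ) ≤
      (H.edgeSet.ncard : ℝ) / (Fintype.card V : ℝ) := by
  let g : U ↪ V := ⟨f, hf⟩
  have hFH : F.map g ≤ H := (map_le_iff_le_comap g F H).2 fun a b => hhom a b
  have hedges : (F.map g).edgeSet.ncard = F.edgeSet.ncard := by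
    rw [edgeSet_map, ncard_image_of_injective _ g.sym2Map.injective]
  have hsupp : (F.map g).support.ncard ≤ Fintype.card U := by
    rw [support_map, ← Nat.card_eq_fintype_card]
    exact (ncard_image_le (toFinite _)).trans (ncard_le_card _)
  have hcross : Fintype.card V * F.edgeSet.ncard ≤ Fintype.card U * H.edgeSet.ncard := by
    rw [← hedges]
    exact (hH.card_mul_ncard_edgeSet_le hnoiso hFH).trans (Nat.mul_le_mul_right _ hsupp)
  rcases (Fintype.card U).eq_zero_or_pos with hU | hU
  · rw [hU, Nat.cast_zero, div_zero]
    positivity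
  · have hV : 0 < Fintype.card V := hU.trans_le (Fintype.card_le_of_injective f hf)
    rw [div_le_div_iff₀ (by positivity) (by positivity)]
    exact_mod_cast (mul_comm _ _).le.trans (hcross.trans (mul_comm _ _).le)
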